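/- Let G be the free group on the letters F_0, F_1, …, F_n and let N be the kernel of the homomorphism G → ℤ sending every generator F_i to 1 (so N consists of the words in which the number of positive letters equals the number of negative letters). Then N is a free group, freely generated by the elements F_0^j F_i F_0^{-(j+1)} for 1 ≤ i ≤ n and j ∈ ℤ; that is, there is a group isomorphism from the free group on the set {1,…,n} × ℤ onto N sending the generator (i,j) to F_0^j F_i F_0^{-(j+1)}. -/
import Mathlib

open FreeGroup SemidirectProduct

namespace Stmt10Aux

variable (n : ℕ)

abbrev G (n : ℕ) := FreeGroup (Fin (n + 1))
abbrev F (n : ℕ) := FreeGroup (Fin n × ℤ)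

def a : G n := FreeGroup.of 0

/-- equality of MulAuts of a free group from agreement on generators -/
lemma mulaut_ext {α : Type*} {f g : MulAut (FreeGroup α)}
    (h : ∀ x, f (FreeGroup.of x) = g (FreeGroup.of x)) : f = g := by
  have : f.toMonoidHom = g.toMonoidHom := FreeGroup.ext_hom _ _ h
  exact MulEquiv.toMonoidHom_injective this

def shift : Multiplicative ℤ →* MulAut (F n) where
  toFun k := FreeGroup.freeGroupCongr
    (Equiv.prodCongr (Equiv.refl (Fin n)) (Equiv.addRight (Multiplicative.toAdd k)))
  map_one' := by
    apply mulaut_ext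
    rintro ⟨i, j⟩
    simp
  map_mul' x y := by
    apply mulaut_ext
    rintro ⟨i, j⟩
    simp [add_comm, add_assoc, add_left_comm]

@[simp] lemma shift_of (k : Multiplicative ℤ) (i : Fin n) (j : ℤ) :
    shift n k (FreeGroup.of (i, j)) = FreeGroup.of (i, j + Multiplicative.toAdd k) := by
  simp [shift]

def φmap : F n →* G n :=
  FreeGroup.lift fun p => a n ^ p.2 * FreeGroup.of p.1.succ * a n ^ (-(p.2 + 1))

@[simp] lemma φmap_of (i : Fin n) (j : ℤ) :
    φmap n (FreeGroup.of (i, j)) = a n ^ j * FreeGroup.of i.succ * a n ^ (-(j + 1)) := by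
  simp [φmap]

lemma compat (g : Multiplicative ℤ) :
    (φmap n).comp (shift n g).toMonoidHom =
      (MulAut.conj ((zpowersHom (G n) (a n)) g)).toMonoidHom.comp (φmap n) := by
  apply FreeGroup.ext_hom
  rintro ⟨i, j⟩
  simp only [MonoidHom.comp_apply, MulEquiv.coe_toMonoidHom, shift_of, φmap_of,
    zpowersHom_apply, MulAut.conj_apply]
  group

def Ψ : F n ⋊[shift n] Multiplicative ℤ →* G n :=
  SemidirectProduct.lift (φmap n) (zpowersHom (G n) (a n)) (compat n)

def Φ : G n →* F n ⋊[shift n] Multiplicative ℤ :=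
  FreeGroup.lift fun v => Fin.cases (inr (Multiplicative.ofAdd 1))
    (fun i => ⟨FreeGroup.of (i, (0 : ℤ)), Multiplicative.ofAdd 1⟩) v

@[simp] lemma Φ_zero : Φ n (a n) = inr (Multiplicative.ofAdd 1) := by
  simp [Φ, a]

@[simp] lemma Φ_succ (i : Fin n) :
    Φ n (FreeGroup.of i.succ) = ⟨FreeGroup.of (i, (0 : ℤ)), Multiplicative.ofAdd 1⟩ := by
  simp [Φ]

lemma Ψ_comp_Φ : (Ψ n).comp (Φ n) = MonoidHom.id _ := by
  apply FreeGroup.ext_hom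
  intro v
  induction v using Fin.cases with
  | zero =>
    show Ψ n (Φ n (a n)) = a n
    simp [Ψ]
  | succ i =>
    simp only [MonoidHom.comp_apply, Φ_succ, MonoidHom.id_apply]
    have : (⟨FreeGroup.of (i, (0 : ℤ)), Multiplicative.ofAdd 1⟩ :
        F n ⋊[shift n] Multiplicative ℤ) =
        inl (FreeGroup.of (i, (0 : ℤ))) * inr (Multiplicative.ofAdd 1) := by
      ext <;> simp
    rw [this]
    simp [Ψ]

lemma Φ_comp_φmap : (Φ n).comp (φmap n) = inl := by
  apply FreeGroup.ext_hom
  rintro ⟨i, j⟩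
  rw [MonoidHom.comp_apply, φmap_of, MonoidHom.map_mul, MonoidHom.map_mul, MonoidHom.map_zpow,
    MonoidHom.map_zpow, Φ_zero, Φ_succ, ← MonoidHom.map_zpow, ← MonoidHom.map_zpow]
  have h1 : (Multiplicative.ofAdd (1:ℤ)) ^ j = Multiplicative.ofAdd j := by
    simp [← ofAdd_zsmul]
  have h2 : (Multiplicative.ofAdd (1:ℤ)) ^ (-(j+1)) = Multiplicative.ofAdd (-(j+1)) := by
    simp [← ofAdd_zsmul]
  rw [h1, h2]
  ext
  · simp [SemidirectProduct.mul_left]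
  · simp only [SemidirectProduct.mul_right, SemidirectProduct.right_inr,
      SemidirectProduct.right_inl]
    rw [← ofAdd_add, ← ofAdd_add, show j + 1 + -(j + 1) = 0 by ring]
    rfl

lemma φmap_injective : Function.Injective (φmap n) := by
  have h : Function.Injective ((Φ n).comp (φmap n)) := by
    rw [Φ_comp_φmap]; exact inl_injective
  exact fun x y hxy => h (by simp [hxy])

lemma rightHom_comp_Φ :
    (rightHom.comp (Φ n) : G n →* Multiplicative ℤ) =
      FreeGroup.lift (fun _ : Fin (n + 1) => Multiplicative.ofAdd (1 : ℤ)) := by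
  apply FreeGroup.ext_hom
  intro v
  induction v using Fin.cases with
  | zero =>
    show rightHom (Φ n (a n)) = _
    rw [Φ_zero]
    simp
  | succ i => simp

end Stmt10Aux

theorem stmt_10 (n : ℕ) :
    ∃ e : FreeGroup (Fin n × ℤ) ≃*
        MonoidHom.ker (FreeGroup.lift fun _ : Fin (n + 1) => Multiplicative.ofAdd (1 : ℤ)),
      ∀ (i : Fin n) (j : ℤ),
        (↑(e (FreeGroup.of (i, j))) : FreeGroup (Fin (n + 1))) =
          FreeGroup.of (0 : Fin (n + 1)) ^ j * FreeGroup.of i.succ *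
            FreeGroup.of (0 : Fin (n + 1)) ^ (-(j + 1)) := by
  classical
  set K := MonoidHom.ker (FreeGroup.lift fun _ : Fin (n + 1) => Multiplicative.ofAdd (1 : ℤ))
  have hmem : ∀ w : Stmt10Aux.F n, Stmt10Aux.φmap n w ∈ K := by
    intro w
    have := congrArg (fun f => (SemidirectProduct.rightHom.comp f)) (Stmt10Aux.Φ_comp_φmap n)
    simp only [← MonoidHom.comp_assoc, Stmt10Aux.rightHom_comp_Φ] at this
    have hw := congrArg (fun f => f w) this
    simpa [MonoidHom.mem_ker, K] using hw
  let f : Stmt10Aux.F n →* K := (Stmt10Aux.φmap n).codRestrict K hmem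
  have hinj : Function.Injective f := by
    intro x y hxy
    apply Stmt10Aux.φmap_injective n
    have := congrArg (Subtype.val) hxy
    simpa [f] using this
  have hsurj : Function.Surjective f := by
    rintro ⟨g, hg⟩
    refine ⟨(Stmt10Aux.Φ n g).left, ?_⟩
    have hr : (Stmt10Aux.Φ n g).right = 1 := by
      have := congrArg (fun h => h g) (Stmt10Aux.rightHom_comp_Φ n)
      simp only [MonoidHom.comp_apply] at this
      rw [MonoidHom.mem_ker] at hg
      rw [hg] at this
      simpa using this
    have hdecomp : SemidirectProduct.inl (Stmt10Aux.Φ n g).left = Stmt10Aux.Φ n g := by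
      rw [← SemidirectProduct.inl_left_mul_inr_right (Stmt10Aux.Φ n g), hr]
      simp
    ext
    show Stmt10Aux.φmap n (Stmt10Aux.Φ n g).left = g
    have h1 : Stmt10Aux.Ψ n (SemidirectProduct.inl (Stmt10Aux.Φ n g).left) =
        Stmt10Aux.φmap n (Stmt10Aux.Φ n g).left := by simp [Stmt10Aux.Ψ]
    have h2 : Stmt10Aux.Ψ n (Stmt10Aux.Φ n g) = g := by
      have := congrArg (fun h => h g) (Stmt10Aux.Ψ_comp_Φ n)
      simpa using this
    rw [← h1, hdecomp, h2]
  refine ⟨MulEquiv.ofBijective f ⟨hinj, hsurj⟩, ?_⟩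
  intro i j
  show (f (FreeGroup.of (i, j)) : FreeGroup (Fin (n + 1))) = _
  simp [f, Stmt10Aux.a]
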